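/- Let Δ be a simplicial complex on [n] and let m = ∏_{i=1}^n x_i^{a_i} be a monomial in S with supp(m) ≠ [n]. Then m ∈ I_Δ^[2] + (x_1 x_2 ⋯ x_n) if and only if supp₂(m) is not a face of Δ. -/

import Mathlib

open MvPowerSeries Finset

/-- A simplicial complex on `[n]`: contains `∅` and is closed under taking subsets. -/
def IsSimplicialComplex {n : ℕ} (Δ : Set (Finset (Fin n))) : Prop :=
  ∅ ∈ Δ ∧ ∀ F ∈ Δ, ∀ G, G ⊆ F → G ∈ Δ

/-- A facet: a face maximal with respect to inclusion. -/
def IsFacet {n : ℕ} (Δ : Set (Finset (Fin n))) (G : Finset (Fin n)) : Prop :=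
  G ∈ Δ ∧ ∀ H ∈ Δ, G ⊆ H → H = G

/-- A free face: a face `F` such that `F ∪ {i}` is a facet for some `i ∉ F` and
`F ∪ {i}` is the unique facet containing `F`. -/
def IsFreeFace {n : ℕ} (Δ : Set (Finset (Fin n))) (F : Finset (Fin n)) : Prop :=
  F ∈ Δ ∧ ∃ i ∉ F, IsFacet Δ (insert i F) ∧
    ∀ G, IsFacet Δ G → F ⊆ G → G = insert i F

/-- The Stanley–Reisner ideal `I_Δ` in `S = K[[x_1, …, x_n]]`. -/
noncomputable def SRIdeal (K : Type*) [Field K] {n : ℕ} (Δ : Set (Finset (Fin n))) :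
    Ideal (MvPowerSeries (Fin n) K) :=
  Ideal.span ((fun F : Finset (Fin n) => ∏ i ∈ F, (X i : MvPowerSeries (Fin n) K)) ''
    {F | F ∉ Δ})

/-- The second Frobenius power `I_Δ^[2]` in `S = K[[x_1, …, x_n]]`. -/
noncomputable def SRIdeal2 (K : Type*) [Field K] {n : ℕ} (Δ : Set (Finset (Fin n))) :
    Ideal (MvPowerSeries (Fin n) K) :=
  Ideal.span ((fun F : Finset (Fin n) => ∏ i ∈ F, (X i : MvPowerSeries (Fin n) K) ^ 2) ''
    {F | F ∉ Δ})

/-!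
Both summands are monomial ideals, and a monomial lies in a monomial ideal iff one of the
generators divides it: otherwise every element of the ideal has zero coefficient at its exponent.
Since `supp(m) ≠ [n]`, the generator `x_1 ⋯ x_n` does not divide `m`, while `∏_{i∈F} x_i^2`
divides `m` iff `F ⊆ supp₂(m)`. As `Δ` is closed under subsets, such an `F ∉ Δ` exists iff
`supp₂(m) ∉ Δ`.
-/

namespace MvPowerSeries

variable {σ R : Type*} [CommSemiring R]

theorem prod_X_pow_eq_monomial (s : Finset σ) (e : σ → ℕ) :
    ∏ i ∈ s, (X i : MvPowerSeries σ R) ^ e i = monomial (∑ i ∈ s, Finsupp.single i (e i)) 1 := by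
  simp only [X_pow_eq, prod_monomial, prod_const_one]

theorem monomial_one_mem_span_monomial_one_iff [Nontrivial R] (E : Set (σ →₀ ℕ)) (d : σ →₀ ℕ) :
    monomial d (1 : R) ∈ Ideal.span ((fun e => monomial e 1) '' E) ↔ ∃ e ∈ E, e ≤ d := by
  constructor
  · intro h
    by_contra! hE
    obtain ⟨c, hc, hsum⟩ := Submodule.mem_span_set.1 h
    have hcoeff : coeff d (monomial d (1 : R)) = 0 := by
      rw [← hsum, Finsupp.sum, map_sum]
      refine Finset.sum_eq_zero fun f hf => ?_
      obtain ⟨e, he, rfl⟩ := hc hf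
      rw [smul_eq_mul, coeff_mul_monomial, if_neg (hE e he)]
    exact one_ne_zero (by rwa [coeff_monomial_same] at hcoeff)
  · rintro ⟨e, he, hed⟩
    have hfactor : monomial d (1 : R) = monomial (d - e) 1 * monomial e 1 := by
      rw [monomial_mul_monomial, mul_one, tsub_add_cancel_of_le hed]
    rw [hfactor]
    exact Ideal.mul_mem_left _ _ (Ideal.subset_span ⟨e, he, rfl⟩)

end MvPowerSeries

namespace Finsupp

variable {σ : Type*}

theorem sum_single_apply [DecidableEq σ] (s : Finset σ) (e : σ → ℕ) (j : σ) :
    (∑ i ∈ s, single i (e i)) j = if j ∈ s then e j else 0 := by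
  simp [finsetSum_apply, single_apply]

theorem sum_single_le_iff (s : Finset σ) (k : ℕ) (f : σ →₀ ℕ) :
    ∑ i ∈ s, single i k ≤ f ↔ ∀ i ∈ s, k ≤ f i := by
  classical
  simp only [le_def, sum_single_apply]
  refine ⟨fun h i hi => by simpa [hi] using h i, fun h i => ?_⟩
  split_ifs with hi
  exacts [h i hi, zero_le]

end Finsupp

theorem SRIdeal2_sup_span_prod_X_eq_span_monomial (K : Type*) [Field K] {n : ℕ}
    (Δ : Set (Finset (Fin n))) :
    SRIdeal2 K Δ ⊔ Ideal.span {∏ i : Fin n, (X i : MvPowerSeries (Fin n) K)} =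
      Ideal.span ((fun e => monomial e 1) ''
        ((fun F => ∑ i ∈ F, Finsupp.single i 2) '' {F | F ∉ Δ} ∪
          {∑ i : Fin n, Finsupp.single i 1})) := by
  have hprod := prod_X_pow_eq_monomial (R := K) (univ : Finset (Fin n)) (fun _ => 1)
  simp only [pow_one] at hprod
  rw [Set.image_union, Set.image_image, Set.image_singleton, Ideal.span_union, SRIdeal2, hprod]
  simp only [prod_X_pow_eq_monomial]

/-- If `supp(m) ≠ [n]`, then `m ∈ I_Δ^[2] + (x_1 ⋯ x_n)` iff
`supp₂(m)` is not a face of Δ. -/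
theorem stmt_5 (K : Type*) [Field K] {n : ℕ} (Δ : Set (Finset (Fin n)))
    (hΔ : IsSimplicialComplex Δ) (a : Fin n → ℕ)
    (hsupp : (Finset.univ.filter fun i => 1 ≤ a i) ≠ Finset.univ) :
    (∏ i : Fin n, (X i : MvPowerSeries (Fin n) K) ^ a i) ∈
        SRIdeal2 K Δ ⊔ Ideal.span {∏ i : Fin n, (X i : MvPowerSeries (Fin n) K)} ↔
      (Finset.univ.filter fun i => 2 ≤ a i) ∉ Δ := by
  have hexp (i : Fin n) : (∑ j : Fin n, Finsupp.single j (a j)) i = a i := by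
    simp [Finsupp.sum_single_apply]
  rw [SRIdeal2_sup_span_prod_X_eq_span_monomial, prod_X_pow_eq_monomial,
    monomial_one_mem_span_monomial_one_iff]
  constructor
  · rintro ⟨e, ⟨F, hF, rfl⟩ | rfl, he⟩ hface
    · rw [Finsupp.sum_single_le_iff] at he
      exact hF (hΔ.2 _ hface F fun i hi => by simpa [hexp] using he i hi)
    · rw [Finsupp.sum_single_le_iff] at he
      exact hsupp (eq_univ_of_forall fun i => by simpa [hexp] using he i (mem_univ i))
  · intro hface
    refine ⟨_, Or.inl ⟨_, hface, rfl⟩, ?_⟩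
    rw [Finsupp.sum_single_le_iff]
    intro i hi
    simpa [hexp] using hi
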